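/- arXiv:1703.05967 — 6 statements merged into one kernel-verified Lean document; each statement's English description precedes it below -/
import Mathlib

section
/- The vertex 0 is a cone point of the no broken circuit complex of a loopless matroid M on {0,...,n}: for every face F of the no broken circuit complex (a set containing no broken circuit and independent in M), the set F ∪ {0} is also a face, provided M has no parallel pair containing 0 and no loops. -/
open Set

/-- A circuit of a matroid: a minimal dependent set. -/
def Matroid.IsCircuit' {α : Type*} (M : Matroid α) (C : Set α) : Prop :=
  M.Dep C ∧ ∀ D ⊂ C, M.Indep D

/-- A broken circuit: a circuit with its least element (in the natural order) removed. -/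
def Matroid.IsBrokenCircuit {n : ℕ} (M : Matroid (Fin (n + 1))) (B : Set (Fin (n + 1))) : Prop :=
  ∃ C m, M.IsCircuit' C ∧ m ∈ C ∧ (∀ k ∈ C, m ≤ k) ∧ B = C \ {m}

/-!
Since `0` is the least element of the ground set, it is removed from every circuit containing
it, so no broken circuit contains `0`; hence adding `0` to `F` creates no broken circuit. If
`F ∪ {0}` were dependent, it would contain a circuit `C`, necessarily through `0` as `F` is
independent, and then the broken circuit `C \ {0}` would lie in `F`.
-/

namespace Matroid

lemma IsCircuit.isCircuit' {α : Type*} {M : Matroid α} {C : Set α} (hC : M.IsCircuit C) :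
    M.IsCircuit' C :=
  ⟨hC.dep, fun _ hD ↦ hC.ssubset_indep hD⟩

variable {n : ℕ} {M : Matroid (Fin (n + 1))}

lemma IsCircuit'.isBrokenCircuit_diff_zero {C : Set (Fin (n + 1))} (hC : M.IsCircuit' C)
    (h0 : 0 ∈ C) : M.IsBrokenCircuit (C \ {0}) :=
  ⟨C, 0, hC, h0, fun k _ ↦ Fin.zero_le k, rfl⟩

lemma IsBrokenCircuit.zero_notMem {B : Set (Fin (n + 1))} (hB : M.IsBrokenCircuit B) :
    0 ∉ B := by
  obtain ⟨C, m, -, hmC, hmin, rfl⟩ := hB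
  rintro ⟨h0C, h0m⟩
  exact h0m (le_antisymm (Fin.zero_le m) (hmin 0 h0C))

lemma IsBrokenCircuit.not_subset_union_zero {B F : Set (Fin (n + 1))} (hB : M.IsBrokenCircuit B)
    (hBF : ¬ B ⊆ F) : ¬ B ⊆ F ∪ {0} := fun hB0 ↦
  hBF fun _ hx ↦ (hB0 hx).resolve_right fun hx0 ↦ hB.zero_notMem (mem_singleton_iff.1 hx0 ▸ hx)

lemma Indep.union_zero_indep {F : Set (Fin (n + 1))} (hF : M.Indep F) (h0 : 0 ∈ M.E)
    (hFnbc : ∀ B, M.IsBrokenCircuit B → ¬ B ⊆ F) : M.Indep (F ∪ {0}) := by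
  by_contra hdep
  obtain ⟨C, hCF, hC⟩ :=
    ((not_indep_iff (union_subset hF.subset_ground (singleton_subset_iff.2 h0))).1 hdep
      ).exists_isCircuit_subset
  have h0C : 0 ∈ C := by
    by_contra h0C
    exact hC.dep.not_indep (hF.subset fun _ hx ↦
      (hCF hx).resolve_right fun hx0 ↦ h0C (mem_singleton_iff.1 hx0 ▸ hx))
  exact hFnbc _ (hC.isCircuit'.isBrokenCircuit_diff_zero h0C) fun _ hx ↦
    (hCF hx.1).resolve_right hx.2

end Matroid

theorem zero_conePoint_NBC_general {n : ℕ} (M : Matroid (Fin (n + 1)))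
    (hE : M.E = Set.univ)
    (F : Set (Fin (n + 1)))
    (hFnbc : ∀ B, M.IsBrokenCircuit B → ¬ B ⊆ F)
    (hFindep : M.Indep F) :
    (∀ B, M.IsBrokenCircuit B → ¬ B ⊆ F ∪ {0}) ∧ M.Indep (F ∪ {0}) :=
  ⟨fun B hB ↦ hB.not_subset_union_zero (hFnbc B hB),
    hFindep.union_zero_indep (hE ▸ mem_univ 0) hFnbc⟩

/-- `0` is a cone point of the no broken circuit complex: for every face `F`
(a set containing no broken circuit and independent in `M`), `F ∪ {0}` is again a face,
provided `M` has no loops and no parallel pair containing `0`. -/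
theorem zero_conePoint_NBC {n : ℕ} (M : Matroid (Fin (n + 1)))
    (hE : M.E = Set.univ)
    (hloopless : ∀ e : Fin (n + 1), M.Indep {e})
    (hparallel : ∀ e : Fin (n + 1), e ≠ 0 → M.Indep {0, e})
    (F : Set (Fin (n + 1)))
    (hFnbc : ∀ B, M.IsBrokenCircuit B → ¬ B ⊆ F)
    (hFindep : M.Indep F) :
    (∀ B, M.IsBrokenCircuit B → ¬ B ⊆ F ∪ {0}) ∧ M.Indep (F ∪ {0}) :=
  zero_conePoint_NBC_general M hE F hFnbc hFindep
end

section
/- Every subset of the ground set of a matroid M containing no broken circuit is an independent set of M. -/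
open Set

/-- every subset of the ground set containing no broken circuit is independent. -/
theorem indep_of_no_brokenCircuit {n : ℕ} (M : Matroid (Fin (n + 1)))
    (hE : M.E = Set.univ)
    (S : Set (Fin (n + 1)))
    (hS : ∀ B, M.IsBrokenCircuit B → ¬ B ⊆ S) :
    M.Indep S := by
  by_contra hind
  have hdepS : M.Dep S := ⟨hind, by rw [hE]; exact subset_univ S⟩
  -- find a minimal dependent subset of S
  have hwf : WellFoundedLT (Set (Fin (n + 1))) := inferInstance
  obtain ⟨C, ⟨hCS, hCdep⟩, hmin⟩ :=
    hwf.wf.has_min {C : Set (Fin (n + 1)) | C ⊆ S ∧ M.Dep C} ⟨S, subset_rfl, hdepS⟩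
  have hcirc : M.IsCircuit' C := by
    refine ⟨hCdep, fun D hD => ?_⟩
    by_contra hDind
    exact hmin D ⟨hD.subset.trans hCS, ⟨hDind, hD.subset.trans hCdep.subset_ground⟩⟩ hD
  have hCne : C.Nonempty := by
    rcases C.eq_empty_or_nonempty with h | h
    · exact absurd (h ▸ M.empty_indep) hCdep.not_indep
    · exact h
  obtain ⟨m, hmC, hmle⟩ := Set.exists_min_image C id C.toFinite hCne
  exact hS (C \ {m}) ⟨C, m, hcirc, hmC, hmle, rfl⟩
    ((diff_subset).trans hCS)
end

section
/- The no broken circuit complex of a matroid M of rank r+1 is pure of dimension r: every maximal subset containing no broken circuit is a basis of M. -/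
open Set

/-!
An NBC set `S` is independent, since a circuit inside `S` would leave its broken circuit in `S`.
If it were not a basis, let `e` be the least element outside `M.closure S`. Then `insert e S` is
still NBC: a broken circuit `C \ {m}` inside it must contain `e`, so `m < e` forces
`m ∈ M.closure S`, whence `C \ {e} ⊆ M.closure S` and `e ∈ M.closure (C \ {e}) ⊆ M.closure S`.
This contradicts the maximality of `S`.
-/

namespace Matroid

variable {n : ℕ} {M : Matroid (Fin (n + 1))} {S : Set (Fin (n + 1))} {e : Fin (n + 1)}

lemma isCircuit'_iff_isCircuit {α : Type*} {M : Matroid α} {C : Set α} :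
    M.IsCircuit' C ↔ M.IsCircuit C := by
  rw [isCircuit_iff_forall_ssubset]
  rfl

/-- The faces of the no broken circuit complex. -/
def IsNBC (M : Matroid (Fin (n + 1))) (S : Set (Fin (n + 1))) : Prop :=
  ∀ B, M.IsBrokenCircuit B → ¬ B ⊆ S

lemma IsCircuit.isBrokenCircuit_sdiff_min {C : Set (Fin (n + 1))} (hC : M.IsCircuit C)
    {m : Fin (n + 1)} (hmC : m ∈ C) (hmin : ∀ k ∈ C, m ≤ k) : M.IsBrokenCircuit (C \ {m}) :=
  ⟨C, m, isCircuit'_iff_isCircuit.2 hC, hmC, hmin, rfl⟩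

lemma IsCircuit.exists_isBrokenCircuit_subset {C : Set (Fin (n + 1))} (hC : M.IsCircuit C) :
    ∃ B ⊆ C, M.IsBrokenCircuit B := by
  obtain ⟨m, hmC, hmin⟩ := C.exists_min_image id C.toFinite hC.nonempty
  exact ⟨C \ {m}, sdiff_subset, hC.isBrokenCircuit_sdiff_min hmC hmin⟩

lemma IsNBC.indep (hS : M.IsNBC S) (hSE : S ⊆ M.E) : M.Indep S := by
  by_contra hdep
  obtain ⟨C, hCS, hC⟩ := Dep.exists_isCircuit_subset ⟨hdep, hSE⟩
  obtain ⟨B, hBC, hB⟩ := hC.exists_isBrokenCircuit_subset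
  exact hS B hB (hBC.trans hCS)

lemma IsNBC.insert_of_forall_lt_mem_closure (hS : M.IsNBC S) (hSE : S ⊆ M.E)
    (he : e ∉ M.closure S) (hlt : ∀ x < e, x ∈ M.closure S) : M.IsNBC (insert e S) := by
  rintro _ ⟨C, m, hC, hmC, hmin, rfl⟩ hBS
  have heB : e ∈ C \ {m} := by
    by_contra heB
    exact hS _ ⟨C, m, hC, hmC, hmin, rfl⟩ fun x hx ↦
      (hBS hx).resolve_left fun hxe ↦ heB (hxe ▸ hx)
  have hm : m ∈ M.closure S := hlt m <| (hmin e heB.1).lt_of_ne (Ne.symm heB.2)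
  have hCe : C \ {e} ⊆ M.closure S := by
    intro x ⟨hxC, hxe⟩
    obtain rfl | hxm := eq_or_ne x m
    · exact hm
    · exact M.subset_closure S hSE <| (hBS ⟨hxC, hxm⟩).resolve_left hxe
  exact he <| M.closure_subset_closure_of_subset_closure hCe <|
    (isCircuit'_iff_isCircuit.1 hC).mem_closure_sdiff_singleton_of_mem heB.1

end Matroid

open Matroid in
theorem NBC_pure_general {n r : ℕ} (M : Matroid (Fin (n + 1)))
    (hE : M.E = Set.univ)
    (hrank : ∀ B : Set (Fin (n + 1)), M.IsBase B → B.ncard = r + 1)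
    (S : Set (Fin (n + 1)))
    (hS : ∀ B, M.IsBrokenCircuit B → ¬ B ⊆ S)
    (hSmax : ∀ T, (∀ B, M.IsBrokenCircuit B → ¬ B ⊆ T) → S ⊆ T → S = T) :
    M.IsBase S ∧ S.ncard = r + 1 := by
  have hSE : S ⊆ M.E := hE ▸ subset_univ S
  have hbase : M.IsBase S := by
    rw [(IsNBC.indep hS hSE).isBase_iff_ground_subset_closure]
    by_contra hnot
    obtain ⟨e, he, hmin⟩ := (M.closure S)ᶜ.exists_min_image id (toFinite _)
      (nonempty_compl.2 fun h ↦ hnot (h ▸ subset_univ _))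
    have hins : M.IsNBC (insert e S) := IsNBC.insert_of_forall_lt_mem_closure hS hSE he
      fun x hx ↦ by_contra fun hxS ↦ (hmin x hxS).not_gt hx
    have heS : e ∈ S := hSmax _ hins (subset_insert e S) ▸ mem_insert e S
    exact he (M.subset_closure S hSE heS)
  exact ⟨hbase, hrank S hbase⟩

/-- the no broken circuit complex of a loopless matroid of rank `r+1` is pure of
dimension `r`: every maximal set containing no broken circuit is a basis of `M`
(in particular it has `r+1` elements). -/
theorem NBC_pure {n r : ℕ} (M : Matroid (Fin (n + 1)))
    (hE : M.E = Set.univ)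
    (hloopless : ∀ e : Fin (n + 1), M.Indep {e})
    (hrank : ∀ B : Set (Fin (n + 1)), M.IsBase B → B.ncard = r + 1)
    (S : Set (Fin (n + 1)))
    (hS : ∀ B, M.IsBrokenCircuit B → ¬ B ⊆ S)
    (hSmax : ∀ T, (∀ B, M.IsBrokenCircuit B → ¬ B ⊆ T) → S ⊆ T → S = T) :
    M.IsBase S ∧ S.ncard = r + 1 :=
  NBC_pure_general M hE hrank S hS hSmax
end

section
/- For every face F of the reduced no broken circuit complex of a simple matroid M of rank r+1 and every total order ≺ on the ground set, the set L(F) defined by i ∈ L(F) iff i ∈ F or rk(i↑ ∪ F) > rk((i↑ \ {i}) ∪ F) (where i↑ = {j : i ≺ j}) is a basis of M containing F; moreover it is the ≺-lexicographically maximal basis containing F. -/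
open Set

/-- The rank of a set in a matroid: the largest size of an independent subset. -/
noncomputable def Matroid.rk' {α : Type*} (M : Matroid α) (S : Set α) : ℕ :=
  sSup {k | ∃ I, I ⊆ S ∧ M.Indep I ∧ I.ncard = k}

/-- A face of the reduced no broken circuit complex: a subset of `{1,…,n}` containing
no broken circuit (such a set is automatically independent). -/
def RNBCface {n : ℕ} (M : Matroid (Fin (n + 1))) (F : Set (Fin (n + 1))) : Prop :=
  (0 : Fin (n + 1)) ∉ F ∧ (∀ B, M.IsBrokenCircuit B → ¬ B ⊆ F) ∧ M.Indep F

/-- The up-set `i↑` of `i` with respect to a second linear order `≺` (including `i` itself). -/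
def upSet {n : ℕ} (prec : LinearOrder (Fin (n + 1))) (i : Fin (n + 1)) : Set (Fin (n + 1)) :=
  {j | prec.le i j}

/-- `L(F)`: the candidate `≺`-lexicographically maximal basis containing `F`, defined by
`i ∈ L(F)` iff `i ∈ F` or `rk(i↑ ∪ F) > rk((i↑ \ {i}) ∪ F)`. -/
noncomputable def LSet {n : ℕ} (M : Matroid (Fin (n + 1))) (prec : LinearOrder (Fin (n + 1)))
    (F : Set (Fin (n + 1))) : Set (Fin (n + 1)) :=
  {i | i ∈ F ∨ M.rk' (upSet prec i ∪ F) > M.rk' ((upSet prec i \ {i}) ∪ F)}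

/-- The facet `F̄` of the extended no broken circuit complex attached to a face `F` of the
reduced no broken circuit complex:  `{y_i : i ∈ F} ∪ {x_j : j ∈ L(F) \ F} ∪ {y_0}`,
with `x`-vertices encoded by `Sum.inl` and `y`-vertices by `Sum.inr`. -/
noncomputable def barFace {n : ℕ} (M : Matroid (Fin (n + 1))) (prec : LinearOrder (Fin (n + 1)))
    (F : Set (Fin (n + 1))) : Set (Fin (n + 1) ⊕ Fin (n + 1)) :=
  (Sum.inr '' F) ∪ (Sum.inl '' (LSet M prec F \ F)) ∪ {Sum.inr 0}

/-- A face of the extended no broken circuit complex `Δ^ENBC_{M,≺}`: a subset of some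
facet `F̄`. -/
noncomputable def ENBCface {n : ℕ} (M : Matroid (Fin (n + 1))) (prec : LinearOrder (Fin (n + 1)))
    (G : Set (Fin (n + 1) ⊕ Fin (n + 1))) : Prop :=
  ∃ F, RNBCface M F ∧ G ⊆ barFace M prec F

/-! `L(F)` is the greedy basis obtained by adding `F` first and then scanning the ground set from
the `≺`-top down, keeping an element exactly when it raises the rank of what lies above it
(together with `F`). By downward induction, `(L(F) ∩ S) ∪ F` is a basis of `S ∪ F` for every
`≺`-up-set `S`; with `S` the whole ground set, `L(F)` is a basis. If `B ⊇ F` is another basis,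
let `j` be the `≺`-largest element where `B` and `L(F)` differ. Were `j ∈ B \ L(F)`, then
`j` would be spanned by `F` and `L(F) ∩ j↑ = B ∩ j↑`, i.e. by `B \ {j}`, contradicting the
independence of `B`. -/

lemma Set.eq_Ioi_of_isUpperSet_insert {β : Type*} [Preorder β] {a : β} {s : Set β}
    (hs : IsUpperSet (insert a s)) (ha : ∀ x ∈ s, a < x) : s = Ioi a :=
  Subset.antisymm ha fun _ hx => (hs hx.le (mem_insert a s)).resolve_left hx.ne'

namespace Matroid

variable {α : Type*} {M : Matroid α} {X F B : Set α} {e : α}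

lemma rk'_eq_toNat_eRk (M : Matroid α) (X : Set α) : M.rk' X = (M.eRk X).toNat := by
  have hS : {k | ∃ I, I ⊆ X ∧ M.Indep I ∧ I.ncard = k} = {k : ℕ | (k : ℕ∞) ≤ M.eRk X} := by
    ext k
    refine ⟨?_, fun hk => ?_⟩
    · rintro ⟨I, hIX, hI, rfl⟩
      obtain hfin | hinf := I.finite_or_infinite
      · show (I.ncard : ℕ∞) ≤ _
        rw [hfin.cast_ncard_eq]
        exact hI.encard_le_eRk_of_subset hIX
      · simp [hinf.ncard]
    · obtain ⟨I, hIX, hI, hIk⟩ := le_eRk_iff.1 hk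
      exact ⟨I, hIX, hI, by rw [Set.ncard_def, hIk, ENat.toNat_natCast]⟩
  rw [rk', hS]
  obtain htop | hfin := eq_or_ne (M.eRk X) ⊤
  · simp [htop]
  · lift M.eRk X to ℕ using hfin with r
    simp_rw [Nat.cast_le, ENat.toNat_natCast]
    exact csSup_Iic

lemma rk'_lt_rk'_insert_iff [M.RankFinite] (he : e ∈ M.E) :
    M.rk' X < M.rk' (insert e X) ↔ e ∉ M.closure X := by
  have hfin : M.eRk X ≠ ⊤ := eRk_ne_top_iff.2 (M.isRkFinite_set X)
  simp_rw [rk'_eq_toNat_eRk]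
  by_cases hcl : e ∈ M.closure X
  · rw [← eRk_insert_closure_eq, insert_eq_of_mem hcl, eRk_closure_eq]
    simp [hcl]
  · rw [eRk_insert_eq_add_one ⟨he, hcl⟩, ENat.toNat_add hfin ENat.one_ne_top]
    simp [hcl]

section LexBasis

variable [LinearOrder α]

def lexBasis (M : Matroid α) (F : Set α) : Set α :=
  {i | i ∈ F ∨ i ∉ M.closure (Ioi i ∪ F)}

lemma subset_lexBasis : F ⊆ M.lexBasis F := fun _ => Or.inl

lemma IsBasis.lexBasis_inter_Ici_union (hE : M.E = univ) {a : α}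
    (h : M.IsBasis (M.lexBasis F ∩ Ioi a ∪ F) (Ioi a ∪ F)) :
    M.IsBasis (M.lexBasis F ∩ Ici a ∪ F) (Ici a ∪ F) := by
  rw [← Ioi_insert, insert_union]
  by_cases hcl : a ∈ M.closure (Ioi a ∪ F)
  · have haL : a ∈ M.lexBasis F → a ∈ F := fun ha => ha.resolve_right (not_not.2 hcl)
    have hI : M.lexBasis F ∩ insert a (Ioi a) ∪ F = M.lexBasis F ∩ Ioi a ∪ F := by
      ext x
      simp only [mem_union, mem_inter_iff, mem_insert_iff]
      grind
    rw [hI]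
    refine h.isBasis_closure_right.isBasis_subset (h.subset.trans (subset_insert _ _)) ?_
    exact insert_subset hcl (M.subset_closure _ (hE ▸ subset_univ _))
  · rw [inter_insert_of_mem (show a ∈ M.lexBasis F from Or.inr hcl), insert_union]
    exact h.insert_isBasis_insert_of_notMem_closure (h.closure_eq_closure ▸ hcl) (hE ▸ mem_univ a)

lemma isBasis_lexBasis_inter_union [Finite α] (hE : M.E = univ) (hF : M.Indep F) {s : Set α}
    (hs : IsUpperSet s) : M.IsBasis (M.lexBasis F ∩ s ∪ F) (s ∪ F) := by
  classical
  obtain ⟨t, rfl⟩ := s.toFinite.exists_finset_coe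
  induction t using Finset.induction_on_min with
  | empty => simpa using hF.isBasis_self
  | insert a t hat ih =>
    rw [Finset.coe_insert] at hs ⊢
    rw [eq_Ioi_of_isUpperSet_insert hs hat] at ih ⊢
    rw [Ioi_insert]
    exact (ih (isUpperSet_Ioi a)).lexBasis_inter_Ici_union hE

lemma lexBasis_isBase [Finite α] (hE : M.E = univ) (hF : M.Indep F) : M.IsBase (M.lexBasis F) := by
  have h := isBasis_lexBasis_inter_union hE hF isUpperSet_univ
  rwa [inter_univ, univ_union, union_eq_left.2 subset_lexBasis, ← hE, isBasis_ground_iff] at h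

lemma exists_mem_lexBasis_diff_forall_lt [Finite α] (hE : M.E = univ) (hF : M.Indep F)
    (hB : M.Indep B) (hFB : F ⊆ B) (hBL : B ≠ M.lexBasis F) :
    ∃ j ∈ M.lexBasis F \ B, ∀ k ∈ B \ M.lexBasis F, k < j := by
  set L := M.lexBasis F
  have hne : (L \ B ∪ B \ L).Nonempty := by
    rw [nonempty_iff_ne_empty, Ne, union_empty_iff, sdiff_eq_empty, sdiff_eq_empty]
    exact fun h => hBL (h.2.antisymm h.1)
  obtain ⟨j, hj, hjmax⟩ := Set.exists_max_image _ id (toFinite _) hne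
  have hjLB : j ∈ L \ B := by
    refine hj.resolve_right fun ⟨hjB, hjL⟩ => ?_
    have hjF : j ∉ F := fun h => hjL (subset_lexBasis h)
    have hagree : L ∩ Ioi j = B ∩ Ioi j := by
      ext x
      simp only [mem_inter_iff, mem_Ioi]
      have hx := hjmax x
      simp only [id, mem_union, mem_sdiff] at hx
      grind
    have hjcl : j ∈ M.closure (Ioi j ∪ F) := by_contra fun h => hjL (Or.inr h)
    rw [← (isBasis_lexBasis_inter_union hE hF (isUpperSet_Ioi j)).closure_eq_closure, hagree] at hjcl
    refine hB.notMem_closure_sdiff_of_mem hjB (M.closure_subset_closure ?_ hjcl)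
    exact union_subset (fun x hx => ⟨hx.1, (mem_Ioi.1 hx.2).ne'⟩)
      fun x hx => ⟨hFB hx, fun h => hjF (h ▸ hx)⟩
  exact ⟨j, hjLB, fun k hk => (hjmax k (Or.inr hk)).lt_of_ne (by rintro rfl; exact hjLB.2 hk.1)⟩

end LexBasis

end Matroid

lemma LSet_eq_lexBasis {n : ℕ} {M : Matroid (Fin (n + 1))} (prec : LinearOrder (Fin (n + 1)))
    (hE : M.E = univ) (F : Set (Fin (n + 1))) :
    LSet M prec F = @Matroid.lexBasis _ prec M F := by
  ext i
  refine or_congr_right' fun _ => ?_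
  have hup : upSet prec i = insert i {j | prec.lt i j} := by
    ext j
    simp only [upSet, mem_insert_iff, mem_ofPred_eq]
    exact (@le_iff_eq_or_lt _ prec.toPartialOrder i j).trans (or_congr_left eq_comm)
  rw [gt_iff_lt, hup, insert_union,
    insert_sdiff_self_of_notMem (s := {j | prec.lt i j}) (@lt_irrefl _ prec.toPreorder i)]
  exact Matroid.rk'_lt_rk'_insert_iff (hE ▸ mem_univ i)

theorem LSet_isLexMaxBasis_general {n : ℕ} (M : Matroid (Fin (n + 1)))
    (prec : LinearOrder (Fin (n + 1)))
    (hE : M.E = Set.univ)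
    (F : Set (Fin (n + 1))) (hF : RNBCface M F) :
    M.IsBase (LSet M prec F) ∧ F ⊆ LSet M prec F ∧
      ∀ B, M.IsBase B → F ⊆ B → B ≠ LSet M prec F →
        ∃ j ∈ LSet M prec F \ B, ∀ k ∈ B \ LSet M prec F, prec.lt k j := by
  obtain ⟨-, -, hFind⟩ := hF
  rw [LSet_eq_lexBasis prec hE]
  exact ⟨Matroid.lexBasis_isBase hE hFind, Matroid.subset_lexBasis,
    fun B hB hFB hBL => Matroid.exists_mem_lexBasis_diff_forall_lt hE hFind hB.indep hFB hBL⟩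

/-- for every face `F` of the reduced no broken circuit complex of a simple
matroid of rank `r+1`, the set `L(F)` is a basis of `M` containing `F`, and it is the
`≺`-lexicographically maximal such basis. -/
theorem LSet_isLexMaxBasis {n r : ℕ} (M : Matroid (Fin (n + 1)))
    (prec : LinearOrder (Fin (n + 1)))
    (hE : M.E = Set.univ)
    (hsimple : ∀ e f : Fin (n + 1), e ≠ f → M.Indep {e, f})
    (hloopless : ∀ e : Fin (n + 1), M.Indep {e})
    (hrank : ∀ B : Set (Fin (n + 1)), M.IsBase B → B.ncard = r + 1)
    (F : Set (Fin (n + 1))) (hF : RNBCface M F) :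
    M.IsBase (LSet M prec F) ∧ F ⊆ LSet M prec F ∧
      ∀ B, M.IsBase B → F ⊆ B → B ≠ LSet M prec F →
        ∃ j ∈ LSet M prec F \ B, ∀ k ∈ B \ LSet M prec F, prec.lt k j :=
  LSet_isLexMaxBasis_general M prec hE F hF
end

section
/- The map F ↦ F̄ from faces of the reduced no broken circuit complex to facets of the extended no broken circuit complex is injective; in particular, the number of facets of Δ^ENBC_{M,≺} equals the total number of faces of Δ^RNBC_M. -/
open Set

theorem inr_preimage_barFace_diff_zero {n : ℕ} (M : Matroid (Fin (n + 1)))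
    (prec : LinearOrder (Fin (n + 1))) {F : Set (Fin (n + 1))} (h0 : (0 : Fin (n + 1)) ∉ F) :
    Sum.inr ⁻¹' barFace M prec F \ {0} = F := by
  ext i
  simp only [barFace, mem_sdiff, mem_preimage, mem_union, mem_image, mem_singleton_iff,
    Sum.inr.injEq, reduceCtorEq, and_false, exists_false, or_false, exists_eq_right]
  constructor
  · rintro ⟨hi | rfl, hne⟩
    · exact hi
    · exact absurd rfl hne
  · intro hi
    exact ⟨Or.inl hi, fun h => h0 (h ▸ hi)⟩

theorem barFace_injOn {n : ℕ} (M : Matroid (Fin (n + 1))) (prec : LinearOrder (Fin (n + 1))) :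
    InjOn (barFace M prec) {F | (0 : Fin (n + 1)) ∉ F} := by
  intro F hF G hG h
  rw [← inr_preimage_barFace_diff_zero M prec hF, ← inr_preimage_barFace_diff_zero M prec hG, h]

theorem barFace_injective_general {n : ℕ} (M : Matroid (Fin (n + 1)))
    (prec : LinearOrder (Fin (n + 1))) :
    Set.InjOn (barFace M prec) {F | RNBCface M F} ∧
      (barFace M prec '' {F | RNBCface M F}).ncard = {F | RNBCface M F}.ncard := by
  have hinj : InjOn (barFace M prec) {F | RNBCface M F} :=
    (barFace_injOn M prec).mono fun _ hF => hF.1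
  exact ⟨hinj, hinj.ncard_image⟩

/-- the map `F ↦ F̄` from faces of the reduced no broken circuit complex to
facets of the extended no broken circuit complex is injective; in particular the number of
facets of `Δ^ENBC_{M,≺}` equals the number of faces of `Δ^RNBC_M`. -/
theorem barFace_injective {n r : ℕ} (M : Matroid (Fin (n + 1)))
    (prec : LinearOrder (Fin (n + 1)))
    (hE : M.E = Set.univ)
    (hsimple : ∀ e f : Fin (n + 1), e ≠ f → M.Indep {e, f})
    (hloopless : ∀ e : Fin (n + 1), M.Indep {e})
    (hrank : ∀ B : Set (Fin (n + 1)), M.IsBase B → B.ncard = r + 1) :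
    Set.InjOn (barFace M prec) {F | RNBCface M F} ∧
      (barFace M prec '' {F | RNBCface M F}).ncard = {F | RNBCface M F}.ncard :=
  barFace_injective_general M prec
end

section
/- If F ⊆ H are faces of the reduced no broken circuit complex of a matroid M, then L(H) \ H ⊆ L(F) \ F, where L(·) denotes the ≺-lexicographically maximal basis containing the given independent set. -/
open Set

/-! Adding `i` to `(i↑ \ {i}) ∪ X` raises the rank exactly when `i` lies outside the closure of
that set. Closure is monotone, so passing from `F` to the larger set `H` can only remove
elements from `L(·) \ ·`, never add them. -/

namespace Matroid

variable {α : Type*} {M : Matroid α} {X Y : Set α} {e : α}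

lemma cast_rk'_eq_eRk [M.RankFinite] (X : Set α) : (M.rk' X : ℕ∞) = M.eRk X := by
  obtain ⟨I, hI⟩ := M.exists_isBasis' X
  have hIfin : I.Finite := hI.indep.finite
  suffices hmax : IsGreatest {k | ∃ J, J ⊆ X ∧ M.Indep J ∧ J.ncard = k} I.ncard by
    rw [rk', hmax.csSup_eq, hIfin.cast_ncard_eq, hI.encard_eq_eRk]
  refine ⟨⟨I, hI.subset, hI.indep, rfl⟩, ?_⟩
  rintro _ ⟨J, hJX, hJ, rfl⟩
  have hJI : J.encard ≤ I.encard := hI.encard_eq_eRk ▸ hJ.encard_le_eRk_of_subset hJX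
  rwa [← hJ.finite.cast_ncard_eq, ← hIfin.cast_ncard_eq, Nat.cast_le] at hJI

lemma eRk_lt_eRk_insert_of_subset (hXY : X ⊆ Y) (hY : M.eRk Y < M.eRk (insert e Y)) :
    M.eRk X < M.eRk (insert e X) := by
  have heE : e ∈ M.E := by
    by_contra he
    exact hY.ne (M.eRk_insert_of_notMem_ground Y he).symm
  have heY : e ∉ M.closure Y := by
    intro he
    rw [← eRk_insert_closure_eq, insert_eq_of_mem he, eRk_closure_eq] at hY
    exact hY.false
  have hXfin : M.eRk X ≠ ⊤ := ((M.eRk_mono hXY).trans_lt (hY.trans_le le_top)).ne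
  rw [eRk_insert_eq_add_one ⟨heE, fun he ↦ heY (M.closure_subset_closure hXY he)⟩]
  exact ENat.lt_add_one_iff hXfin |>.mpr le_rfl

lemma rk'_lt_rk'_insert_of_subset [M.RankFinite] (hXY : X ⊆ Y)
    (hY : M.rk' Y < M.rk' (insert e Y)) : M.rk' X < M.rk' (insert e X) := by
  rw [← Nat.cast_lt (α := ℕ∞), cast_rk'_eq_eRk, cast_rk'_eq_eRk] at hY ⊢
  exact eRk_lt_eRk_insert_of_subset hXY hY

end Matroid

lemma upSet_union_eq_insert {n : ℕ} (prec : LinearOrder (Fin (n + 1))) (i : Fin (n + 1))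
    (S : Set (Fin (n + 1))) : upSet prec i ∪ S = insert i ((upSet prec i \ {i}) ∪ S) := by
  have hi : i ∈ upSet prec i := prec.le_refl i
  rw [← insert_union, insert_sdiff_singleton, insert_eq_of_mem hi]

theorem LSet_antitone_general {n : ℕ} (M : Matroid (Fin (n + 1)))
    (prec : LinearOrder (Fin (n + 1)))
    (F H : Set (Fin (n + 1)))
    (hFH : F ⊆ H) :
    LSet M prec H \ H ⊆ LSet M prec F \ F := by
  rintro i ⟨hiH_mem | hgap, hiH_not⟩
  · exact absurd hiH_mem hiH_not
  refine ⟨Or.inr ?_, fun hiF ↦ hiH_not (hFH hiF)⟩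
  rw [upSet_union_eq_insert] at hgap ⊢
  exact M.rk'_lt_rk'_insert_of_subset (union_subset_union_right _ hFH) hgap

/-- if `F ⊆ H` are faces of the reduced no broken circuit complex then
`L(H) \ H ⊆ L(F) \ F`. -/
theorem LSet_antitone {n : ℕ} (M : Matroid (Fin (n + 1)))
    (prec : LinearOrder (Fin (n + 1)))
    (hE : M.E = Set.univ)
    (hsimple : ∀ e f : Fin (n + 1), e ≠ f → M.Indep {e, f})
    (hloopless : ∀ e : Fin (n + 1), M.Indep {e})
    (F H : Set (Fin (n + 1))) (hF : RNBCface M F) (hH : RNBCface M H)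
    (hFH : F ⊆ H) :
    LSet M prec H \ H ⊆ LSet M prec F \ F :=
  LSet_antitone_general M prec F H hFH
end
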